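/- Let (g,γ) be a construction pair on an abelian group (X,+), and equip Q = ℤ × X with the multiplication (i,x)·(j,y) = (i+j, g^{−j}(x)+y+∑_{k∈I(i+j,−j)} g^{−k}(γ(x,y))). Then: (a) an element (i,x) lies in the nucleus of Q (i.e. ((i,x)·v)·w = (i,x)·(v·w), (v·(i,x))·w = v·((i,x)·w) and (v·w)·(i,x) = v·(w·(i,x)) for all v,w ∈ Q) if and only if x ∈ rad γ and ∑_{k∈I(0,i)} g^{−k}(γ(y,z)) = 0 for all y,z ∈ X; (b) an element (i,x) lies in the center of Q (i.e. it lies in the nucleus and (i,x)·v = v·(i,x) for all v ∈ Q) if and only if, in addition, g^i = id and g(x) = x. -/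

import Mathlib

/-- The interval `I(i,j)` of integers: `∅` if `i = j`, `{i,…,j-1}` if `i < j`,
and `{j,…,i-1}` if `j < i`. -/
noncomputable def I (i j : ℤ) : Finset ℤ := Finset.Ico (min i j) (max i j)

/-- A construction pair `(g, γ)` on an abelian group `(X, +)`. -/
structure IsConstructionPair {X : Type*} [AddCommGroup X]
    (g : Equiv.Perm X) (γ : X → X → X) : Prop where
  symm : ∀ x y, γ x y = γ y x
  alt : ∀ x, γ x x = 0
  add_left : ∀ x y z, γ (x + y) z = γ x z + γ y z
  add_right : ∀ x y z, γ x (y + z) = γ x y + γ x z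
  c1 : ∀ x y, g⁻¹ (g x + g y)
      = x + y + γ x y + g⁻¹ (γ x y) + g⁻¹ (g⁻¹ (γ x y))
  c2 : ∀ x y z, γ (γ x y) z = 0
  c3 : ∀ x y, g⁻¹ (γ x y) = γ (g x) y

/-- The multiplication of `ℤ ⋉_{(g,γ)} X` on `ℤ × X`:
`(i,x)·(j,y) = (i+j, g^{-j}(x) + y + ∑_{k ∈ I(i+j,-j)} g^{-k}(γ(x,y)))`. -/
noncomputable def cmul {X : Type*} [AddCommGroup X] (g : Equiv.Perm X) (γ : X → X → X) :
    ℤ × X → ℤ × X → ℤ × X :=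
  fun u v =>
    (u.1 + v.1,
      (g ^ (-v.1)) u.2 + v.2 + ∑ k ∈ I (u.1 + v.1) (-v.1), (g ^ (-k)) (γ u.2 v.2))

/-- The radical of a symmetric mapping `γ : X × X → X`. -/
def radical {X : Type*} [AddCommGroup X] (γ : X → X → X) : Set X :=
  {x | ∀ y, γ x y = 0}

/-!
Since `γ` is alternating and biadditive, its values have order two, and by (C2) and (C3) they
lie in the radical, on which every power of `g` is additive. Every interval sum occurring in the
multiplication is a difference `orbitSum g c b - orbitSum g c a`. In these terms (C1) becomes
`g (a + b) = g a + g b + (orbitSum g (γ a b) (-1) - orbitSum g (γ a b) 2)`, and the correction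
term is a cocycle, which gives the analogous formula for every `g ^ n`. With it the associator of
`(α, a), (β, b), (δ, d)` is the sum of the interval sums of `γ a b`, `γ a d`, `γ b d` from `α + β`,
`α + δ`, `β + δ` to `α + β + δ`. Testing the left nucleus law on `(1, 0), (0, d)` and on
`(0, y), (0, z)` gives the two conditions; conversely they kill all three associators. For `x` in
the radical, commuting with `(0, y)` and `(-1, 0)` forces `g ^ i = 1` and `g x = x`.
-/

open Finset

theorem mem_I {i j k : ℤ} : k ∈ I i j ↔ min i j ≤ k ∧ k < max i j := mem_Ico

theorem sum_I_sub_right {M : Type*} [AddCommMonoid M] (f : ℤ → M) (a b m : ℤ) :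
    ∑ k ∈ I a b, f (k - m) = ∑ k ∈ I (a - m) (b - m), f k :=
  sum_nbij' (· - m) (· + m) (by intro k; simp only [mem_I]; omega)
    (by intro k; simp only [mem_I]; omega) (by simp) (by simp) (by simp)

/-- `I` forgets orientation, so Chasles' relation for sums over it needs 2-torsion values. -/
theorem sum_I_eq_sub {M : Type*} [AddCommGroup M] (f : ℤ → M) (hf : ∀ k, f k + f k = 0)
    (a b : ℤ) : ∑ k ∈ I a b, f k = ∑ k ∈ I 0 b, f k - ∑ k ∈ I 0 a, f k := by
  have hunion : I 0 a ∪ I a b = I 0 b ∪ (I 0 a ∩ I a b) := by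
    ext k; simp only [mem_union, mem_inter, mem_I]; omega
  have hdisj : Disjoint (I 0 b) (I 0 a ∩ I a b) := by
    rw [disjoint_left]; intro k; simp only [mem_inter, mem_I]; omega
  have hinter : ∑ k ∈ I 0 a ∩ I a b, f k + ∑ k ∈ I 0 a ∩ I a b, f k = 0 := by
    rw [← sum_add_distrib]; exact sum_eq_zero fun k _ => hf k
  rw [eq_sub_iff_add_eq, add_comm, ← sum_union_inter, hunion, sum_union hdisj, add_assoc, hinter,
    add_zero]

/-- Every interval sum in `cmul` is a difference of two of these (see `sum_I_eq_orbitSum_sub`). -/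
noncomputable def orbitSum {X : Type*} [AddCommGroup X] (g : Equiv.Perm X) (c : X) (n : ℤ) : X :=
  ∑ k ∈ I 0 n, (g ^ (-k)) c

theorem orbitSum_at_zero {X : Type*} [AddCommGroup X] (g : Equiv.Perm X) (c : X) :
    orbitSum g c 0 = 0 := by
  simp [orbitSum, I]

def IsNuclear {X : Type*} [AddCommGroup X] (g : Equiv.Perm X) (γ : X → X → X) (q : ℤ × X) :
    Prop :=
  (∀ v w : ℤ × X, cmul g γ (cmul g γ q v) w = cmul g γ q (cmul g γ v w)) ∧
  (∀ v w : ℤ × X, cmul g γ (cmul g γ v q) w = cmul g γ v (cmul g γ q w)) ∧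
  (∀ v w : ℤ × X, cmul g γ (cmul g γ v w) q = cmul g γ v (cmul g γ w q))

namespace IsConstructionPair

variable {X : Type*} [AddCommGroup X] {g : Equiv.Perm X} {γ : X → X → X}
  (h : IsConstructionPair g γ)
include h

theorem gamma_zero_left (y : X) : γ 0 y = 0 := by
  simpa using h.add_left 0 0 y

theorem gamma_zero_right (y : X) : γ y 0 = 0 := by
  rw [h.symm, h.gamma_zero_left]

theorem gamma_add_self (x y : X) : γ x y + γ x y = 0 := by
  have := h.alt (x + y)
  rwa [h.add_left, h.add_right, h.add_right, h.alt, h.alt, zero_add, add_zero, h.symm y x] at this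

theorem gamma_sub_left (x y w : X) : γ (x - y) w = γ x w - γ y w := by
  rw [eq_sub_iff_add_eq, ← h.add_left, sub_add_cancel]

theorem gamma_sub_right (x y w : X) : γ w (x - y) = γ w x - γ w y := by
  rw [h.symm, h.gamma_sub_left, h.symm x, h.symm y]

theorem gamma_mem_radical (x y : X) : γ x y ∈ radical γ := h.c2 x y

theorem add_mem_radical {c d : X} (hc : c ∈ radical γ) (hd : d ∈ radical γ) :
    c + d ∈ radical γ := fun w => by rw [h.add_left, hc w, hd w, add_zero]

theorem inv_apply_zero : g⁻¹ (0 : X) = 0 :=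
  calc g⁻¹ 0 = g⁻¹ (γ 0 (g 0)) := by rw [h.gamma_zero_left]
    _ = 0 := by rw [h.c3, h.alt]

theorem zpow_apply_zero (n : ℤ) : (g ^ n) (0 : X) = 0 :=
  Equiv.Perm.zpow_apply_eq_self_of_apply_eq_self
    (Equiv.Perm.inv_eq_iff_eq.mp h.inv_apply_zero).symm n

theorem gamma_zpow_left (n : ℤ) (x y : X) : γ ((g ^ n) x) y = (g ^ (-n)) (γ x y) := by
  induction n using Int.induction_on generalizing x with
  | zero => simp
  | succ k ih =>
    rw [zpow_add_one, Equiv.Perm.mul_apply, ih, ← h.c3, neg_add, zpow_add, zpow_neg_one,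
      Equiv.Perm.mul_apply]
  | pred k ih =>
    have hinv : γ (g⁻¹ x) y = g (γ x y) := by
      rw [← Equiv.Perm.inv_eq_iff_eq, h.c3]; simp
    rw [zpow_sub_one, Equiv.Perm.mul_apply, ih, hinv, ← Equiv.Perm.mul_apply, ← zpow_add_one]
    congr 2; ring

theorem gamma_zpow_right (n : ℤ) (x y : X) : γ x ((g ^ n) y) = (g ^ (-n)) (γ x y) := by
  rw [h.symm, h.gamma_zpow_left, h.symm]

theorem gamma_zpow_zpow (n : ℤ) (x y : X) :
    γ ((g ^ n) x) ((g ^ n) y) = (g ^ (-(2 * n))) (γ x y) := by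
  rw [h.gamma_zpow_left, h.gamma_zpow_right, ← Equiv.Perm.mul_apply, ← zpow_add]
  congr 2; ring

theorem zpow_mem_radical {c : X} (hc : c ∈ radical γ) (n : ℤ) : (g ^ n) c ∈ radical γ :=
  fun w => by rw [h.gamma_zpow_left, hc w, h.zpow_apply_zero]

theorem apply_add_of_gamma_eq_zero {a b : X} (hab : γ a b = 0) : g (a + b) = g a + g b := by
  have := h.c1 a b
  rw [hab, h.inv_apply_zero, h.inv_apply_zero, add_zero, add_zero, add_zero,
    Equiv.Perm.inv_eq_iff_eq] at this
  exact this.symm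

theorem zpow_add_of_mem_radical {c : X} (hc : c ∈ radical γ) (n : ℤ) (w : X) :
    (g ^ n) (w + c) = (g ^ n) w + (g ^ n) c := by
  induction n using Int.induction_on generalizing c w with
  | zero => rfl
  | succ k ih =>
    rw [zpow_add_one, Equiv.Perm.mul_apply, Equiv.Perm.mul_apply, Equiv.Perm.mul_apply,
      h.apply_add_of_gamma_eq_zero (by rw [h.symm]; exact hc w),
      ih (c := g c) (by simpa using h.zpow_mem_radical hc 1)]
  | pred k ih =>
    have hinv : g⁻¹ (w + c) = g⁻¹ w + g⁻¹ c := by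
      have hc' : g⁻¹ c ∈ radical γ := by simpa using h.zpow_mem_radical hc (-1)
      rw [Equiv.Perm.inv_eq_iff_eq, h.apply_add_of_gamma_eq_zero (by rw [h.symm]; exact hc' _)]
      simp
    rw [zpow_sub_one, Equiv.Perm.mul_apply, Equiv.Perm.mul_apply, Equiv.Perm.mul_apply, hinv,
      ih (by simpa using h.zpow_mem_radical hc (-1))]

theorem zpow_sub_of_mem_radical {c : X} (hc : c ∈ radical γ) (n : ℤ) (w : X) :
    (g ^ n) (w - c) = (g ^ n) w - (g ^ n) c := by
  rw [eq_sub_iff_add_eq, ← h.zpow_add_of_mem_radical hc, sub_add_cancel]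

theorem zpow_sum_of_mem_radical {ι : Type*} (s : Finset ι) (f : ι → X)
    (hf : ∀ i ∈ s, f i ∈ radical γ) (n : ℤ) :
    (g ^ n) (∑ i ∈ s, f i) = ∑ i ∈ s, (g ^ n) (f i) := by
  classical
  induction s using Finset.induction_on with
  | empty => simp [h.zpow_apply_zero]
  | insert a s ha ih =>
    rw [sum_insert ha, sum_insert ha, add_comm,
      h.zpow_add_of_mem_radical (hf a (mem_insert_self a s)),
      ih fun i hi => hf i (mem_insert_of_mem hi), add_comm]

theorem zpow_apply_add_self {c : X} (hc : c ∈ radical γ) (hc2 : c + c = 0) (n : ℤ) :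
    (g ^ n) c + (g ^ n) c = 0 := by
  rw [← h.zpow_add_of_mem_radical hc, hc2, h.zpow_apply_zero]

theorem sum_I_eq_orbitSum_sub {c : X} (hc : c ∈ radical γ) (hc2 : c + c = 0) (a b : ℤ) :
    ∑ k ∈ I a b, (g ^ (-k)) c = orbitSum g c b - orbitSum g c a :=
  sum_I_eq_sub _ (fun k => h.zpow_apply_add_self hc hc2 (-k)) a b

theorem orbitSum_zero (n : ℤ) : orbitSum g 0 n = 0 :=
  sum_eq_zero fun k _ => h.zpow_apply_zero (-k)

theorem orbitSum_mem_radical {c : X} (hc : c ∈ radical γ) (n : ℤ) : orbitSum g c n ∈ radical γ :=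
  sum_induction _ (· ∈ radical γ) (fun _ _ => h.add_mem_radical) h.gamma_zero_left
    fun k _ => h.zpow_mem_radical hc (-k)

theorem orbitSum_add {c d : X} (hd : d ∈ radical γ) (n : ℤ) :
    orbitSum g (c + d) n = orbitSum g c n + orbitSum g d n := by
  rw [orbitSum, orbitSum, orbitSum, ← sum_add_distrib]
  exact sum_congr rfl fun k _ => h.zpow_add_of_mem_radical hd (-k) c

theorem zpow_orbitSum {c : X} (hc : c ∈ radical γ) (hc2 : c + c = 0) (m n : ℤ) :
    (g ^ m) (orbitSum g c n) = orbitSum g c (n - m) - orbitSum g c (-m) := by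
  rw [orbitSum, h.zpow_sum_of_mem_radical _ _ fun k _ => h.zpow_mem_radical hc (-k)]
  have hshift : ∀ k : ℤ, (g ^ m) ((g ^ (-k)) c) = (g ^ (-(k - m))) c := fun k => by
    rw [← Equiv.Perm.mul_apply, ← zpow_add]; congr 2; ring
  rw [sum_congr rfl fun k _ => hshift k, sum_I_sub_right (fun k => (g ^ (-k)) c), zero_sub,
    h.sum_I_eq_orbitSum_sub hc hc2]

theorem orbitSum_zpow {c : X} (hc : c ∈ radical γ) (hc2 : c + c = 0) (j n : ℤ) :
    orbitSum g ((g ^ j) c) n = orbitSum g c (n - j) - orbitSum g c (-j) := by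
  rw [← h.zpow_orbitSum hc hc2, orbitSum, orbitSum,
    h.zpow_sum_of_mem_radical _ _ fun k _ => h.zpow_mem_radical hc (-k)]
  exact sum_congr rfl fun k _ => Equiv.Perm.zpow_apply_comm g _ _

theorem orbitSum_add_of_orbitSum_eq_zero {c : X} (hc : c ∈ radical γ) (hc2 : c + c = 0)
    {i : ℤ} (hi : orbitSum g c i = 0) (n : ℤ) : orbitSum g c (n + i) = orbitSum g c n := by
  have := h.zpow_orbitSum hc hc2 (-n) i
  rwa [hi, h.zpow_apply_zero, sub_neg_eq_add, neg_neg, add_comm, eq_comm, sub_eq_zero] at this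

/-- The correction term of `zpow_apply_add` is a cocycle: pushing the formula for `g ^ n`
through the formula for `g ^ m` gives the formula for `g ^ (m + n)`. -/
theorem zpow_apply_add_step {m : ℤ}
    (hm : ∀ a b : X, (g ^ m) (a + b) = (g ^ m) a + (g ^ m) b
      + (orbitSum g (γ a b) (-m) - orbitSum g (γ a b) (2 * m))) (n : ℤ) (a b : X) :
    (g ^ m) ((g ^ n) a + (g ^ n) b + (orbitSum g (γ a b) (-n) - orbitSum g (γ a b) (2 * n)))
      = (g ^ (m + n)) a + (g ^ (m + n)) b
        + (orbitSum g (γ a b) (-(m + n)) - orbitSum g (γ a b) (2 * (m + n))) := by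
  have hc := h.gamma_mem_radical a b
  have hc2 := h.gamma_add_self a b
  rw [← add_sub_assoc, h.zpow_sub_of_mem_radical (h.orbitSum_mem_radical hc _),
    h.zpow_add_of_mem_radical (h.orbitSum_mem_radical hc _), hm, h.gamma_zpow_zpow,
    h.orbitSum_zpow hc hc2, h.orbitSum_zpow hc hc2, h.zpow_orbitSum hc hc2,
    h.zpow_orbitSum hc hc2, ← Equiv.Perm.mul_apply, ← Equiv.Perm.mul_apply, ← zpow_add]
  ring_nf
  abel

theorem apply_add (a b : X) :
    g (a + b) = g a + g b + (orbitSum g (γ a b) (-1) - orbitSum g (γ a b) 2) := by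
  have hc := h.gamma_mem_radical a b
  have h3 : γ a b + g⁻¹ (γ a b) + g⁻¹ (g⁻¹ (γ a b)) = orbitSum g (γ a b) 3 := by
    rw [orbitSum, show I 0 3 = {0, 1, 2} by decide, sum_insert (by decide),
      sum_insert (by decide), sum_singleton, ← add_assoc]
    simp [zpow_ofNat, sq]
  have hsum := h.c1 a b
  have hsplit := h.zpow_add_of_mem_radical (h.orbitSum_mem_radical hc 3) 1 (a + b)
  have hshift := h.zpow_orbitSum hc (h.gamma_add_self a b) 1 3
  rw [zpow_one] at hsplit hshift
  rw [add_assoc (a + b), add_assoc (a + b), h3, Equiv.Perm.inv_eq_iff_eq, hsplit, hshift] at hsum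
  norm_num at hsum
  rw [hsum]
  abel

theorem zpow_apply_add (n : ℤ) (a b : X) : (g ^ n) (a + b)
    = (g ^ n) a + (g ^ n) b + (orbitSum g (γ a b) (-n) - orbitSum g (γ a b) (2 * n)) := by
  have hone : ∀ a b : X, (g ^ (1 : ℤ)) (a + b) = (g ^ (1 : ℤ)) a + (g ^ (1 : ℤ)) b
      + (orbitSum g (γ a b) (-1) - orbitSum g (γ a b) (2 * 1)) := by
    simpa using h.apply_add
  have hneg_one : ∀ a b : X, (g ^ (-1 : ℤ)) (a + b) = (g ^ (-1 : ℤ)) a + (g ^ (-1 : ℤ)) b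
      + (orbitSum g (γ a b) (- -1) - orbitSum g (γ a b) (2 * -1)) := fun a b =>
    (g ^ (1 : ℤ)).injective <| by
      rw [h.zpow_apply_add_step hone, ← Equiv.Perm.mul_apply, ← zpow_add]
      simp [orbitSum_at_zero]
  induction n using Int.induction_on generalizing a b with
  | zero => simp [orbitSum_at_zero]
  | succ k ih =>
    rw [add_comm (k : ℤ) 1, ← h.zpow_apply_add_step hone, ← ih, ← Equiv.Perm.mul_apply, ← zpow_add]
  | pred k ih =>
    rw [sub_eq_neg_add, ← h.zpow_apply_add_step hneg_one, ← ih, ← Equiv.Perm.mul_apply,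
      ← zpow_add]

theorem cmul_mk (i j : ℤ) (x y : X) : cmul g γ (i, x) (j, y)
    = (i + j, (g ^ (-j)) x + y + (orbitSum g (γ x y) (-j) - orbitSum g (γ x y) (i + j))) := by
  rw [cmul, h.sum_I_eq_orbitSum_sub (h.gamma_mem_radical x y) (h.gamma_add_self x y)]

theorem gamma_orbitSum_left (x y w : X) (n : ℤ) : γ (orbitSum g (γ x y) n) w = 0 :=
  h.orbitSum_mem_radical (h.gamma_mem_radical x y) n w

theorem gamma_orbitSum_right (x y w : X) (n : ℤ) : γ w (orbitSum g (γ x y) n) = 0 := by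
  rw [h.symm]; exact h.gamma_orbitSum_left x y w n

theorem zpow_add_sub_of_mem_radical {c c' : X} (hc : c ∈ radical γ) (hc' : c' ∈ radical γ)
    (n : ℤ) (w : X) : (g ^ n) (w + (c - c')) = (g ^ n) w + ((g ^ n) c - (g ^ n) c') := by
  rw [← add_sub_assoc, h.zpow_sub_of_mem_radical hc', h.zpow_add_of_mem_radical hc, add_sub_assoc]

theorem zsmul_orbitSum_of_even (x y : X) (n : ℤ) {k : ℤ} (hk : Even k) :
    k • orbitSum g (γ x y) n = 0 := by
  obtain ⟨m, rfl⟩ := hk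
  rw [← two_mul, mul_comm, mul_zsmul, two_zsmul,
    ← h.orbitSum_add (h.gamma_mem_radical x y), h.gamma_add_self, h.orbitSum_zero, zsmul_zero]

theorem snd_cmul_cmul (α β δ : ℤ) (a b d : X) :
    (cmul g γ (cmul g γ (α, a) (β, b)) (δ, d)).2 = (cmul g γ (α, a) (cmul g γ (β, b) (δ, d))).2
      + (orbitSum g (γ a b) (α + β + δ) - orbitSum g (γ a b) (α + β)
        + (orbitSum g (γ a d) (α + β + δ) - orbitSum g (γ a d) (α + δ))
        + (orbitSum g (γ b d) (α + β + δ) - orbitSum g (γ b d) (β + δ))) := by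
  have hab := h.gamma_mem_radical a b
  have had := h.gamma_mem_radical a d
  have hbd := h.gamma_mem_radical b d
  have hab2 := h.gamma_add_self a b
  have had2 := h.gamma_add_self a d
  rw [h.cmul_mk α β, h.cmul_mk β δ, h.cmul_mk, h.cmul_mk]
  simp only [h.add_left, h.gamma_sub_left, h.gamma_orbitSum_left, h.gamma_zpow_left,
    h.add_right, h.gamma_sub_right, h.gamma_orbitSum_right, h.gamma_zpow_right, neg_neg,
    sub_zero, add_zero, h.orbitSum_add hbd, h.orbitSum_add had, h.orbitSum_zpow hab hab2,
    h.orbitSum_zpow had had2]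
  rw [h.zpow_add_sub_of_mem_radical (h.orbitSum_mem_radical hab _)
      (h.orbitSum_mem_radical hab _), h.zpow_apply_add, h.gamma_zpow_left]
  simp only [h.orbitSum_zpow hab hab2, h.zpow_orbitSum hab hab2]
  rw [← Equiv.Perm.mul_apply, ← zpow_add, ← sub_eq_zero]
  ring_nf
  abel_nf
  simp [h.zsmul_orbitSum_of_even]

theorem cmul_assoc_iff (α β δ : ℤ) (a b d : X) :
    cmul g γ (cmul g γ (α, a) (β, b)) (δ, d) = cmul g γ (α, a) (cmul g γ (β, b) (δ, d)) ↔
      orbitSum g (γ a b) (α + β + δ) - orbitSum g (γ a b) (α + β)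
        + (orbitSum g (γ a d) (α + β + δ) - orbitSum g (γ a d) (α + δ))
        + (orbitSum g (γ b d) (α + β + δ) - orbitSum g (γ b d) (β + δ)) = 0 := by
  rw [Prod.ext_iff, h.snd_cmul_cmul, add_eq_left]
  exact and_iff_right (add_assoc α β δ)

theorem orbitSum_add_one_sub (x y : X) (n : ℤ) :
    orbitSum g (γ x y) (n + 1) - orbitSum g (γ x y) n = (g ^ (-n)) (γ x y) := by
  rw [← h.sum_I_eq_orbitSum_sub (h.gamma_mem_radical x y) (h.gamma_add_self x y),
    show I n (n + 1) = {n} by ext k; simp only [mem_I, mem_singleton]; omega, sum_singleton]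

theorem isNuclear_iff (i : ℤ) (x : X) :
    IsNuclear g γ (i, x) ↔ x ∈ radical γ ∧ ∀ y z : X, orbitSum g (γ y z) i = 0 := by
  constructor
  · rintro ⟨hleft, -, -⟩
    refine ⟨fun d => (g ^ (-i)).injective ?_, fun y z => ?_⟩
    · have := (h.cmul_assoc_iff i 1 0 x 0 d).mp (hleft (1, 0) (0, d))
      simp only [h.gamma_zero_left, h.gamma_zero_right, h.orbitSum_zero, add_zero, sub_self,
        zero_add, h.orbitSum_add_one_sub] at this
      rw [this, h.zpow_apply_zero]
    · have := (h.cmul_assoc_iff i 0 0 x y z).mp (hleft (0, y) (0, z))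
      simpa [orbitSum_at_zero] using this
  · rintro ⟨hx, hP⟩
    have hx_left : ∀ y, γ x y = 0 := hx
    have hx_right : ∀ y, γ y x = 0 := fun y => by rw [h.symm]; exact hx y
    have hshift : ∀ b d : X, ∀ m n : ℤ, m = n + i →
        orbitSum g (γ b d) m - orbitSum g (γ b d) n = 0 := by
      rintro b d m n rfl
      rw [h.orbitSum_add_of_orbitSum_eq_zero (h.gamma_mem_radical b d) (h.gamma_add_self b d)
        (hP b d), sub_self]
    refine ⟨fun ⟨β, b⟩ ⟨δ, d⟩ => ?_, fun ⟨β, b⟩ ⟨δ, d⟩ => ?_, fun ⟨β, b⟩ ⟨δ, d⟩ => ?_⟩ <;>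
      simp only [h.cmul_assoc_iff, hx_left, hx_right, h.orbitSum_zero, sub_self, zero_add,
        add_zero] <;>
      exact hshift b d _ _ (by ring)

theorem cmul_mk_of_mem_radical_left {x : X} (hx : x ∈ radical γ) (i j : ℤ) (y : X) :
    cmul g γ (i, x) (j, y) = (i + j, (g ^ (-j)) x + y) := by
  rw [h.cmul_mk, hx y, h.orbitSum_zero, h.orbitSum_zero, sub_self, add_zero]

theorem cmul_mk_of_mem_radical_right {x : X} (hx : x ∈ radical γ) (i j : ℤ) (y : X) :
    cmul g γ (j, y) (i, x) = (j + i, (g ^ (-i)) y + x) := by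
  rw [h.cmul_mk, h.symm, hx y, h.orbitSum_zero, h.orbitSum_zero, sub_self, add_zero]

theorem cmul_comm_iff {x : X} (hx : x ∈ radical γ) (i : ℤ) :
    (∀ v : ℤ × X, cmul g γ (i, x) v = cmul g γ v (i, x)) ↔ g ^ i = 1 ∧ g x = x := by
  simp only [Prod.forall, h.cmul_mk_of_mem_radical_left hx, h.cmul_mk_of_mem_radical_right hx,
    Prod.mk.injEq, add_comm i, true_and]
  constructor
  · intro hcomm
    refine ⟨inv_eq_one.mp ?_, ?_⟩
    · rw [← zpow_neg]
      ext y
      simpa [add_comm] using (hcomm 0 y).symm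
    · have := hcomm (-1) 0
      rwa [h.zpow_apply_zero, add_zero, zero_add, neg_neg, zpow_one] at this
  · rintro ⟨hgi, hgx⟩ j y
    rw [Equiv.Perm.zpow_apply_eq_self_of_apply_eq_self hgx, zpow_neg, hgi, inv_one,
      Equiv.Perm.one_apply, add_comm]

end IsConstructionPair

theorem stmt_12 {X : Type*} [AddCommGroup X] (g : Equiv.Perm X) (γ : X → X → X)
    (h : IsConstructionPair g γ) :
    (∀ (i : ℤ) (x : X),
      ((∀ v w : ℤ × X, cmul g γ (cmul g γ (i, x) v) w = cmul g γ (i, x) (cmul g γ v w)) ∧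
       (∀ v w : ℤ × X, cmul g γ (cmul g γ v (i, x)) w = cmul g γ v (cmul g γ (i, x) w)) ∧
       (∀ v w : ℤ × X, cmul g γ (cmul g γ v w) (i, x) = cmul g γ v (cmul g γ w (i, x))))
      ↔ (x ∈ radical γ ∧ ∀ y z : X, ∑ k ∈ I 0 i, (g ^ (-k)) (γ y z) = 0)) ∧
    (∀ (i : ℤ) (x : X),
      (((∀ v w : ℤ × X, cmul g γ (cmul g γ (i, x) v) w = cmul g γ (i, x) (cmul g γ v w)) ∧
        (∀ v w : ℤ × X, cmul g γ (cmul g γ v (i, x)) w = cmul g γ v (cmul g γ (i, x) w)) ∧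
        (∀ v w : ℤ × X, cmul g γ (cmul g γ v w) (i, x) = cmul g γ v (cmul g γ w (i, x)))) ∧
       (∀ v : ℤ × X, cmul g γ (i, x) v = cmul g γ v (i, x)))
      ↔ (x ∈ radical γ ∧ (∀ y z : X, ∑ k ∈ I 0 i, (g ^ (-k)) (γ y z) = 0) ∧
          g ^ i = 1 ∧ g x = x)) := by
  refine ⟨h.isNuclear_iff, fun i x => ?_⟩
  show IsNuclear g γ (i, x) ∧ _ ↔ _
  rw [h.isNuclear_iff, and_assoc]
  exact and_congr_right fun hx => and_congr_right fun _ => h.cmul_comm_iff hx i
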